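/- arXiv:2310.11015 — 7 statements merged into one kernel-verified Lean document; each statement's English description precedes it below -/
import Mathlib

section
/- For arbitrary positive definite real matrices A, B, C of the same size, det(A + B + C) · det(A) ≤ det(A + B) · det(A + C). -/
/-!
Write `C = X* X`. By the matrix determinant lemma, `det (P + C) = det P * det (1 + X P⁻¹ X*)`
for every positive definite `P`. Applied to `P = A + B` and `P = A`, the inequality reduces to
`det (1 + X (A + B)⁻¹ X*) ≤ det (1 + X A⁻¹ X*)`, which follows from the antitonicity of the
inverse, `(A + B)⁻¹ ≤ A⁻¹`, and the monotonicity of `det` on positive definite matrices.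
-/

open Matrix
open scoped MatrixOrder

namespace Matrix

variable {ι : Type*} [Fintype ι] [DecidableEq ι]

/-- Both Schur complements of `fromBlocks B 1 1 A⁻¹` are positive semidefinite together with
the block matrix, and they are `B - A` and `A⁻¹ - B⁻¹`. -/
theorem PosDef.posSemidef_inv_sub_inv {K : Type*} [Field K] [PartialOrder K] [StarRing K]
    [StarOrderedRing K] {A B : Matrix ι ι K} (hA : A.PosDef) (hAB : (B - A).PosSemidef) :
    (A⁻¹ - B⁻¹).PosSemidef := by
  have hB : B.PosDef := by simpa using hA.add_posSemidef hAB
  have := hA.isUnit.invertible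
  have := hB.isUnit.invertible
  have := hA.inv.isUnit.invertible
  have hblock := (PosDef.fromBlocks₂₂ B 1 hA.inv).mpr
  rw [inv_inv_of_invertible] at hblock
  simpa using (PosDef.fromBlocks₁₁ 1 A⁻¹ hB).mp (hblock (by simpa using hAB))

theorem PosSemidef.one_le_det_one_add {Y : Matrix ι ι ℝ} (hY : Y.PosSemidef) :
    1 ≤ (1 + Y).det := by
  have h : 1 + Y = cfc (fun x : ℝ => 1 + x) Y := by
    rw [cfc_add .., cfc_const_one .., cfc_id' ..]
  rw [h, hY.isHermitian.cfc_eq]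
  simp only [IsHermitian.cfc, RCLike.ofReal_real_eq_id, CompTriple.comp_eq, det_map,
    det_diagonal, Function.comp_apply]
  exact Finset.one_le_prod fun i _ => le_add_of_nonneg_right (hY.eigenvalues_nonneg i)

theorem PosDef.det_le_det {A B : Matrix ι ι ℝ} (hA : A.PosDef) (hAB : (B - A).PosSemidef) :
    A.det ≤ B.det := by
  obtain ⟨X, hX⟩ := CStarAlgebra.nonneg_iff_eq_star_mul_self.mp hAB.nonneg
  rw [show B = A + star X * X by rw [← hX]; abel, det_add_mul _ _ hA.det_pos.ne'.isUnit]
  exact le_mul_of_one_le_right hA.det_pos.le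
    (hA.inv.posSemidef.mul_mul_conjTranspose_same X).one_le_det_one_add

theorem PosDef.det_add_add_mul_det_le {A B C : Matrix ι ι ℝ} (hA : A.PosDef)
    (hB : B.PosSemidef) (hC : C.PosSemidef) :
    (A + B + C).det * A.det ≤ (A + B).det * (A + C).det := by
  have hAB : (A + B).PosDef := hA.add_posSemidef hB
  obtain ⟨X, rfl⟩ := CStarAlgebra.nonneg_iff_eq_star_mul_self.mp hC.nonneg
  rw [det_add_mul _ _ hAB.det_pos.ne'.isUnit, det_add_mul _ _ hA.det_pos.ne'.isUnit]
  have hinv : (A⁻¹ - (A + B)⁻¹).PosSemidef := hA.posSemidef_inv_sub_inv (by simpa using hB)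
  have key : (1 + X * (A + B)⁻¹ * star X).det ≤ (1 + X * A⁻¹ * star X).det := by
    refine PosDef.det_le_det
      (PosDef.one.add_posSemidef (hAB.inv.posSemidef.mul_mul_conjTranspose_same X)) ?_
    rw [add_sub_add_left_eq_sub, ← Matrix.sub_mul, ← Matrix.mul_sub]
    exact hinv.mul_mul_conjTranspose_same X
  calc (A + B).det * (1 + X * (A + B)⁻¹ * star X).det * A.det
      ≤ (A + B).det * (1 + X * A⁻¹ * star X).det * A.det :=
        mul_le_mul_of_nonneg_right (mul_le_mul_of_nonneg_left key hAB.det_pos.le) hA.det_pos.le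
    _ = (A + B).det * (A.det * (1 + X * A⁻¹ * star X).det) := by ring

end Matrix

theorem det_add_add_mul_det_le {n : ℕ} (A B C : Matrix (Fin n) (Fin n) ℝ)
    (hA : A.PosDef) (hB : B.PosDef) (hC : C.PosDef) :
    (A + B + C).det * A.det ≤ (A + B).det * (A + C).det :=
  hA.det_add_add_mul_det_le hB.posSemidef hC.posSemidef
end

section
/- For arbitrary positive definite real matrices A, B, C of the same size, det(A + B + C) + det(A) ≥ det(A + B) + det(A + C). -/
/-!
Congruence by `A^(-1/2)` multiplies every determinant by `det A⁻¹` and reduces the inequality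
to `A = 1`. Since `det (1 + M)` is the sum of all principal minors of `M`, it then splits into
the superadditivity `det B_s + det C_s ≤ det (B_s + C_s)` of the principal submatrices, the
empty minor accounting for the extra `1`. Superadditivity reduces the same way to
`1 + det M ≤ det (1 + M)`, which keeps only the empty and the full minor of the expansion.
-/

open Matrix
open scoped MatrixOrder

namespace Matrix

variable {m : Type*} [Fintype m] [DecidableEq m]

theorem det_one_add_eq_sum_det_submatrix {R : Type*} [CommRing R] (M : Matrix m m R) :
    (1 + M).det = ∑ s : Finset m, (M.submatrix ((↑) : s → m) (↑)).det := by
  rw [add_comm]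
  simp only [← det_piecewise_one_eq_submatrix_det]
  exact (detRowAlternating : (m → R) [⋀^m]→ₗ[R] R).map_add_univ M.row (1 : Matrix m m R).row

theorem det_mul_det_mul_mul_eq {R : Type*} [CommRing R] {A P Q : Matrix m m R}
    (h : P * A * Q = 1) (Z : Matrix m m R) : A.det * (P * Z * Q).det = Z.det := by
  have hdet : P.det * A.det * Q.det = 1 := by rw [← det_mul, ← det_mul, h, det_one]
  simp only [det_mul]
  linear_combination Z.det * hdet

theorem det_add_eq_det_mul_det_one_add {R : Type*} [CommRing R] {A P Q : Matrix m m R}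
    (h : P * A * Q = 1) (Z : Matrix m m R) : (A + Z).det = A.det * (1 + P * Z * Q).det := by
  rw [← h, ← Matrix.add_mul, ← Matrix.mul_add, det_mul_det_mul_mul_eq h]

theorem PosSemidef.one_add_det_le_det_one_add [Nonempty m] {M : Matrix m m ℝ}
    (hM : M.PosSemidef) : 1 + M.det ≤ (1 + M).det := by
  have hne : (∅ : Finset m) ≠ Finset.univ := Finset.univ_nonempty.ne_empty.symm
  have hminor_univ :
      (M.submatrix (Subtype.val : {i // i ∈ (Finset.univ : Finset m)} → m) Subtype.val).det =
        M.det :=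
    det_submatrix_equiv_self (Equiv.subtypeUnivEquiv Finset.mem_univ) M
  calc 1 + M.det
      = ∑ s ∈ ({∅, Finset.univ} : Finset (Finset m)),
          (M.submatrix ((↑) : s → m) (↑)).det := by
        simp only [Finset.sum_pair hne, hminor_univ, det_isEmpty]
    _ ≤ ∑ s : Finset m, (M.submatrix ((↑) : s → m) (↑)).det :=
        Finset.sum_le_sum_of_subset_of_nonneg (Finset.subset_univ _)
          fun s _ _ ↦ (hM.submatrix _).det_nonneg
    _ = (1 + M).det := (det_one_add_eq_sum_det_submatrix M).symm

theorem PosDef.exists_isUnit_conjTranspose_mul_mul_eq_one {A : Matrix m m ℝ}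
    (hA : A.PosDef) : ∃ D : Matrix m m ℝ, IsUnit D ∧ Dᴴ * A * D = 1 := by
  set S := CFC.sqrt A
  have hS : IsUnit S := CFC.isUnit_sqrt_iff_isStrictlyPositive.2 hA.isStrictlyPositive
  have hSS : S * S = A := CFC.sqrt_mul_sqrt_self A hA.posSemidef.nonneg
  have hS_herm : Sᴴ = S := (CFC.sqrt_nonneg A).posSemidef.1
  have hS_det : IsUnit S.det := (isUnit_iff_isUnit_det S).1 hS
  refine ⟨S⁻¹, isUnit_nonsing_inv_iff.2 hS, ?_⟩
  rw [conjTranspose_nonsing_inv, hS_herm, ← hSS, Matrix.mul_assoc, Matrix.mul_assoc,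
    mul_nonsing_inv S hS_det, Matrix.mul_one, nonsing_inv_mul S hS_det]

theorem PosDef.det_add_det_le_det_add [Nonempty m] {X Y : Matrix m m ℝ}
    (hX : X.PosDef) (hY : Y.PosSemidef) : X.det + Y.det ≤ (X + Y).det := by
  obtain ⟨D, -, hD⟩ := hX.exists_isUnit_conjTranspose_mul_mul_eq_one
  have hM := (hY.conjTranspose_mul_mul_same D).one_add_det_le_det_one_add
  rw [det_add_eq_det_mul_det_one_add hD, ← det_mul_det_mul_mul_eq hD Y]
  linarith [mul_le_mul_of_nonneg_left hM hX.det_pos.le]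

theorem PosDef.det_one_add_add_det_one_add_le {B C : Matrix m m ℝ}
    (hB : B.PosDef) (hC : C.PosSemidef) :
    (1 + B).det + (1 + C).det ≤ (1 + (B + C)).det + 1 := by
  have hminor : ∀ s ∈ (Finset.univ.erase ∅ : Finset (Finset m)),
      (B.submatrix ((↑) : s → m) (↑)).det + (C.submatrix ((↑) : s → m) (↑)).det ≤
        ((B + C).submatrix ((↑) : s → m) (↑)).det := fun s hs ↦ by
    have : Nonempty s :=
      Finset.nonempty_coe_sort.2 (Finset.nonempty_iff_ne_empty.2 (Finset.ne_of_mem_erase hs))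
    rw [submatrix_add]
    exact (hB.submatrix Subtype.val_injective).det_add_det_le_det_add (hC.submatrix _)
  simp only [det_one_add_eq_sum_det_submatrix, ← Finset.add_sum_erase _ _ (Finset.mem_univ ∅),
    det_isEmpty]
  rw [add_add_add_comm, ← Finset.sum_add_distrib]
  linarith [Finset.sum_le_sum hminor]

end Matrix

theorem det_add_add_add_det_ge {n : ℕ} (A B C : Matrix (Fin n) (Fin n) ℝ)
    (hA : A.PosDef) (hB : B.PosDef) (hC : C.PosDef) :
    (A + B).det + (A + C).det ≤ (A + B + C).det + A.det := by
  obtain ⟨D, hD_unit, hD⟩ := hA.exists_isUnit_conjTranspose_mul_mul_eq_one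
  have hB' : (Dᴴ * B * D).PosDef :=
    hB.conjTranspose_mul_mul_same (mulVec_injective_of_isUnit hD_unit)
  have hC' : (Dᴴ * C * D).PosSemidef := hC.posSemidef.conjTranspose_mul_mul_same D
  have key := hB'.det_one_add_add_det_one_add_le hC'
  rw [add_assoc, det_add_eq_det_mul_det_one_add hD, det_add_eq_det_mul_det_one_add hD,
    det_add_eq_det_mul_det_one_add hD, Matrix.mul_add, Matrix.add_mul]
  linarith [mul_le_mul_of_nonneg_left key hA.det_pos.le]
end

section
/- Let A and B be positive definite matrices with A ⪰ B (A − B positive semidefinite). Then for every nonzero vector x, (xᵀ A x)/(xᵀ B x) ≤ det(A)/det(B). -/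
/-!
Put `C = (y⁻¹)ᴴ A y⁻¹`, where `B = yᴴ y`. Then `1 ≤ C` in the Loewner order, so every eigenvalue of
`C` is at least `1` and hence at most their product `det C = det A / det B`. Thus
`C ≤ (det A / det B) • 1`, and conjugating back gives `A ≤ (det A / det B) • B`;
evaluate both quadratic forms at `x`.
-/

open Matrix

open scoped MatrixOrder

namespace Matrix

variable {n : Type*} [Fintype n] [DecidableEq n]

theorem le_det_smul_one_of_one_le {C : Matrix n n ℝ} (hC : 1 ≤ C) : C ≤ C.det • 1 := by
  have hCh : C.IsHermitian := by
    simpa using (le_iff.mp hC).isHermitian.add isHermitian_one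
  have one_le_eigenvalues : ∀ i, 1 ≤ hCh.eigenvalues i := by
    intro i
    rw [← map_one (algebraMap ℝ (Matrix n n ℝ)), algebraMap_le_iff_le_spectrum] at hC
    exact hC _ (hCh.eigenvalues_mem_spectrum_real i)
  rw [← Algebra.algebraMap_eq_smul_one, le_algebraMap_iff_spectrum_le,
    hCh.spectrum_real_eq_range_eigenvalues, hCh.det_eq_prod_eigenvalues]
  rintro - ⟨i, rfl⟩
  exact Multiset.mem_le_prod_of_one_le one_le_eigenvalues (Finset.mem_univ i)

theorem le_det_div_det_smul_of_le {A B : Matrix n n ℝ} (hB : B.PosDef) (hBA : B ≤ A) :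
    A ≤ (A.det / B.det) • B := by
  obtain ⟨y, hy, rfl⟩ := CStarAlgebra.isStrictlyPositive_iff_eq_star_mul_self.mp
    hB.isStrictlyPositive
  have hdet_y : IsUnit y.det := (isUnit_iff_isUnit_det y).mp hy
  have hyz : y * y⁻¹ = 1 := mul_nonsing_inv y hdet_y
  have hzy : y⁻¹ * y = 1 := nonsing_inv_mul y hdet_y
  have one_le_conj : 1 ≤ star y⁻¹ * A * y⁻¹ :=
    calc (1 : Matrix n n ℝ) = star y⁻¹ * (star y * y) * y⁻¹ := by
          rw [← mul_assoc, ← star_mul, hyz, star_one, one_mul, hyz]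
      _ ≤ star y⁻¹ * A * y⁻¹ := star_left_conjugate_le_conjugate hBA _
  have det_conj : (star y⁻¹ * A * y⁻¹).det = A.det / (star y * y).det := by
    simp only [det_mul, star_eq_conjTranspose, det_conjTranspose, star_trivial, det_nonsing_inv,
      Ring.inverse_eq_inv']
    field_simp [hdet_y.ne_zero]
  calc A = star y * (star y⁻¹ * A * y⁻¹) * y := by
        rw [← mul_assoc, ← mul_assoc, ← star_mul, hzy, star_one, one_mul, mul_assoc, hzy, mul_one]
    _ ≤ star y * ((star y⁻¹ * A * y⁻¹).det • 1) * y :=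
        star_left_conjugate_le_conjugate (le_det_smul_one_of_one_le one_le_conj) y
    _ = (A.det / (star y * y).det) • (star y * y) := by
        rw [det_conj, mul_smul_one, smul_mul]

end Matrix

theorem quadForm_ratio_le_det_ratio_general {n : ℕ} (A B : Matrix (Fin n) (Fin n) ℝ)
    (hB : B.PosDef) (hAB : (A - B).PosSemidef)
    (x : Fin n → ℝ) (hx : x ≠ 0) :
    (x ⬝ᵥ A.mulVec x) / (x ⬝ᵥ B.mulVec x) ≤ A.det / B.det := by
  have hxB : 0 < x ⬝ᵥ B *ᵥ x := by simpa using hB.dotProduct_mulVec_pos hx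
  have hle : A ≤ (A.det / B.det) • B := le_det_div_det_smul_of_le hB (le_iff.mpr hAB)
  rw [div_le_iff₀ hxB]
  simpa [sub_mulVec, smul_mulVec, dotProduct_sub, dotProduct_smul] using
    (le_iff.mp hle).dotProduct_mulVec_nonneg x

theorem quadForm_ratio_le_det_ratio {n : ℕ} (A B : Matrix (Fin n) (Fin n) ℝ)
    (hA : A.PosDef) (hB : B.PosDef) (hAB : (A - B).PosSemidef)
    (x : Fin n → ℝ) (hx : x ≠ 0) :
    (x ⬝ᵥ A.mulVec x) / (x ⬝ᵥ B.mulVec x) ≤ A.det / B.det :=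
  quadForm_ratio_le_det_ratio_general A B hB hAB x hx
end

section
/- Let A and B be symmetric positive semidefinite matrices with A positive definite, and suppose det(A + B) ≤ (1 + γ) det(A) for some γ > 0. Then γ·A − B is positive semidefinite, i.e., A ⪰ (1/γ)B. -/
/-!
Factor `A = U Uᴴ` with `U` invertible and write `B = U M Uᴴ`. Congruence by `U` preserves positive
semidefiniteness, so it suffices to show `γ • 1 - M ⪰ 0`. Since `det (A + B) = det A * det (1 + M)`,
the hypothesis says `∏ᵢ (1 + λᵢ) ≤ 1 + γ` for the eigenvalues `λᵢ ≥ 0` of `M`; every factor is at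
least `1`, so each `λᵢ ≤ γ`.
-/

open Matrix

lemma IsUnit.exists_eq_mul_mul_star {R : Type*} [Monoid R] [StarMul R] {U : R} (hU : IsUnit U)
    (B : R) : ∃ M, B = U * M * star U := by
  obtain ⟨u, rfl⟩ := hU
  exact ⟨↑u⁻¹ * B * star ↑u⁻¹, by simp [mul_assoc, ← star_mul]⟩

namespace Matrix

variable {ι : Type*} [Fintype ι] [DecidableEq ι]

open scoped ComplexOrder MatrixOrder in
lemma PosDef.exists_isUnit_eq_mul_star {𝕜 : Type*} [RCLike 𝕜] {A : Matrix ι ι 𝕜}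
    (hA : A.PosDef) : ∃ U, IsUnit U ∧ A = U * star U :=
  CStarAlgebra.isStrictlyPositive_iff_eq_mul_star_self.mp hA.isStrictlyPositive

lemma IsHermitian.det_one_add {M : Matrix ι ι ℝ} (hM : M.IsHermitian) :
    (1 + M).det = ∏ i, (1 + hM.eigenvalues i) := by
  conv_lhs =>
    rw [hM.spectral_theorem, ← map_one (Unitary.conjStarAlgAut ℝ _ hM.eigenvectorUnitary),
      ← map_add]
  simp [-Unitary.conjStarAlgAut_apply, ← diagonal_one, det_diagonal]

lemma PosSemidef.one_add_eigenvalues_le_det_one_add {M : Matrix ι ι ℝ} (hM : M.PosSemidef)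
    (i : ι) : 1 + hM.1.eigenvalues i ≤ (1 + M).det := by
  rw [hM.1.det_one_add, ← Finset.prod_singleton (fun j ↦ 1 + hM.1.eigenvalues j) i]
  exact Finset.prod_le_prod_of_subset_of_one_le (Finset.subset_univ _)
    (fun j _ ↦ by linarith [hM.eigenvalues_nonneg j])
    (fun j _ _ ↦ by linarith [hM.eigenvalues_nonneg j])

open scoped MatrixOrder in
lemma IsHermitian.posSemidef_smul_one_sub_of_eigenvalues_le {M : Matrix ι ι ℝ}
    (hM : M.IsHermitian) {c : ℝ} (h : ∀ i, hM.eigenvalues i ≤ c) : (c • 1 - M).PosSemidef := by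
  rw [← Algebra.algebraMap_eq_smul_one, ← le_iff]
  refine le_algebraMap_of_spectrum_le (fun x hx ↦ ?_) hM.isSelfAdjoint
  obtain ⟨i, rfl⟩ := hM.spectrum_real_eq_range_eigenvalues ▸ hx
  exact h i

lemma PosSemidef.posSemidef_smul_one_sub_of_det_one_add_le {M : Matrix ι ι ℝ}
    (hM : M.PosSemidef) {γ : ℝ} (hdet : (1 + M).det ≤ 1 + γ) : (γ • 1 - M).PosSemidef :=
  hM.1.posSemidef_smul_one_sub_of_eigenvalues_le fun i ↦ by
    linarith [hM.one_add_eigenvalues_le_det_one_add i]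

end Matrix

theorem det_ratio_le_implies_loewner_general {n : ℕ} (A B : Matrix (Fin n) (Fin n) ℝ)
    (hA : A.PosDef) (hB : B.PosSemidef) (γ : ℝ)
    (hdet : (A + B).det ≤ (1 + γ) * A.det) :
    (γ • A - B).PosSemidef := by
  obtain ⟨U, hU, rfl⟩ := hA.exists_isUnit_eq_mul_star
  obtain ⟨M, rfl⟩ := hU.exists_eq_mul_mul_star B
  rw [hU.posSemidef_star_right_conjugate_iff] at hB
  have hdiff : γ • (U * star U) - U * M * star U = U * (γ • 1 - M) * star U := by
    simp only [mul_sub, sub_mul, mul_smul_comm, smul_mul_assoc, mul_one]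
  rw [hdiff, hU.posSemidef_star_right_conjugate_iff]
  refine hB.posSemidef_smul_one_sub_of_det_one_add_le (le_of_mul_le_mul_left ?_ hA.det_pos)
  calc (U * star U).det * (1 + M).det = (U * star U + U * M * star U).det := by
        simp only [← mul_one_add, ← add_mul, det_mul]; ring
    _ ≤ (U * star U).det * (1 + γ) := hdet.trans_eq (mul_comm _ _)

theorem det_ratio_le_implies_loewner {n : ℕ} (A B : Matrix (Fin n) (Fin n) ℝ)
    (hA : A.PosDef) (hB : B.PosSemidef) (γ : ℝ) (hγ : 0 < γ)
    (hdet : (A + B).det ≤ (1 + γ) * A.det) :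
    (γ • A - B).PosSemidef :=
  det_ratio_le_implies_loewner_general A B hA hB γ hdet
end

section
/- Let x₁, …, x_t be vectors in ℝ^d with ‖x_s‖ ≤ 1 for all s, and λ > 0. Then det(λI + Σ_{s=1}^t x_s x_sᵀ) ≤ (λ + t/d)^d. -/
/-!
The regularized design matrix `M` is positive semidefinite, so `det M` is the product of its
nonnegative eigenvalues, which by AM–GM is at most `(tr M / d) ^ d`. Finally
`tr M = d λ + ∑ₛ ‖xₛ‖² ≤ d λ + t`.
-/

open Matrix Finset

theorem Real.prod_le_sum_div_card_pow {ι : Type*} (s : Finset ι) (z : ι → ℝ)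
    (hz : ∀ i ∈ s, 0 ≤ z i) : ∏ i ∈ s, z i ≤ ((∑ i ∈ s, z i) / #s) ^ #s := by
  rcases s.eq_empty_or_nonempty with rfl | hs
  · simp
  have hcard : (0 : ℝ) < #s := by exact_mod_cast hs.card_pos
  have hw : ∑ _i ∈ s, (#s : ℝ)⁻¹ = 1 := by simp [hcard.ne']
  have amgm := Real.geom_mean_le_arith_mean_weighted s (fun _ ↦ (#s : ℝ)⁻¹) z
    (fun _ _ ↦ by positivity) hw hz
  calc ∏ i ∈ s, z i = (∏ i ∈ s, z i ^ (#s : ℝ)⁻¹) ^ #s := by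
        rw [← prod_pow]
        refine prod_congr rfl fun i hi ↦ ?_
        rw [← Real.rpow_natCast, ← Real.rpow_mul (hz i hi), inv_mul_cancel₀ hcard.ne',
          Real.rpow_one]
    _ ≤ (∑ i ∈ s, (#s : ℝ)⁻¹ * z i) ^ #s :=
        pow_le_pow_left₀ (prod_nonneg fun i hi ↦ Real.rpow_nonneg (hz i hi) _) amgm _
    _ = ((∑ i ∈ s, z i) / #s) ^ #s := by rw [← mul_sum, inv_mul_eq_div]

theorem Matrix.PosSemidef.det_le_trace_div_card_pow {n : Type*} [Fintype n] [DecidableEq n]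
    {A : Matrix n n ℝ} (hA : A.PosSemidef) :
    A.det ≤ (A.trace / Fintype.card n) ^ Fintype.card n := by
  rw [hA.isHermitian.det_eq_prod_eigenvalues, hA.isHermitian.trace_eq_sum_eigenvalues]
  simpa using Real.prod_le_sum_div_card_pow univ _ fun i _ ↦ hA.eigenvalues_nonneg i

theorem Matrix.trace_sum_vecMulVec_self_le {ι n : Type*} [Fintype ι] [Fintype n]
    (x : ι → n → ℝ) (hx : ∀ s, ∑ i, x s i ^ 2 ≤ 1) :
    (∑ s, vecMulVec (x s) (x s)).trace ≤ Fintype.card ι := by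
  rw [trace_sum]
  simpa [trace_vecMulVec, dotProduct, sq] using sum_le_sum fun s (_ : s ∈ univ) ↦ hx s

theorem det_regularized_design_le_general {d t : ℕ} (lam : ℝ) (hlam : 0 < lam)
    (x : Fin t → (Fin d → ℝ)) (hx : ∀ s, ∑ i, (x s i) ^ 2 ≤ 1) :
    (lam • (1 : Matrix (Fin d) (Fin d) ℝ) + ∑ s, vecMulVec (x s) (x s)).det
      ≤ (lam + t / d) ^ d := by
  obtain rfl | hd := d.eq_zero_or_pos
  · simp
  have hdR : (0 : ℝ) < d := by exact_mod_cast hd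
  set M := lam • (1 : Matrix (Fin d) (Fin d) ℝ) + ∑ s, vecMulVec (x s) (x s)
  have hM : M.PosSemidef := (PosSemidef.one.smul hlam.le).add
    (posSemidef_sum _ fun s _ ↦ by simpa using posSemidef_vecMulVec_self_star (x s))
  have htrace : M.trace ≤ d * lam + t := by
    have := trace_sum_vecMulVec_self_le x hx
    simp only [M, trace_add, trace_smul, trace_one, Fintype.card_fin, smul_eq_mul] at this ⊢
    linarith
  calc M.det ≤ (M.trace / d) ^ d := by simpa using hM.det_le_trace_div_card_pow
    _ ≤ (lam + t / d) ^ d := by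
        refine pow_le_pow_left₀ (div_nonneg hM.trace_nonneg hdR.le) ?_ d
        rw [div_le_iff₀ hdR, add_mul, div_mul_cancel₀ _ hdR.ne']
        linarith

theorem det_regularized_design_le {d t : ℕ} (hd : 0 < d) (lam : ℝ) (hlam : 0 < lam)
    (x : Fin t → (Fin d → ℝ)) (hx : ∀ s, ∑ i, (x s i) ^ 2 ≤ 1) :
    (lam • (1 : Matrix (Fin d) (Fin d) ℝ) + ∑ s, vecMulVec (x s) (x s)).det
      ≤ (lam + t / d) ^ d :=
  det_regularized_design_le_general lam hlam x hx
end

section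
/- Let μ, μ̂, α be as in the confidence setting with |μ̂(k) − μ(k)| ≤ α(k) for all k, with optimal arm k*. Let i* = argmax_k μ̂(k), j* = argmax_{j≠i*}(μ̂(j) − μ̂(i*) + α(i*) + α(j)), and B = μ̂(j*) − μ̂(i*) + α(i*) + α(j*). If either i* = k* or j* = k*, and k° = argmax_{k∈{i*,j*}} α(k), then B ≤ min(0, −(μ(k*) − μ(k°)) + 4α(k°)) + 2α(k°). -/
theorem breaking_index_bound_case_opt {K : ℕ} (μ μh α : Fin K → ℝ)
    (kstar : Fin K) (hkstar : ∀ k, k ≠ kstar → μ k < μ kstar)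
    (hconf : ∀ k, |μh k - μ k| ≤ α k)
    (istar : Fin K) (histar : ∀ k, μh k ≤ μh istar)
    (jstar : Fin K) (hj_ne : jstar ≠ istar)
    (hjstar : ∀ j, j ≠ istar →
      μh j - μh istar + α istar + α j ≤ μh jstar - μh istar + α istar + α jstar)
    (hcase : istar = kstar ∨ jstar = kstar)
    (kcirc : Fin K) (hkc : kcirc = istar ∨ kcirc = jstar)
    (hkc1 : α istar ≤ α kcirc) (hkc2 : α jstar ≤ α kcirc)
    (B : ℝ) (hB : B = μh jstar - μh istar + α istar + α jstar) :
    B ≤ min 0 (-(μ kstar - μ kcirc) + 4 * α kcirc) + 2 * α kcirc := by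
  have hi := abs_le.mp (hconf istar)
  have hj := abs_le.mp (hconf jstar)
  have hαi : (0:ℝ) ≤ α istar := le_trans (abs_nonneg _) (hconf istar)
  have hαj : (0:ℝ) ≤ α jstar := le_trans (abs_nonneg _) (hconf jstar)
  have hij := histar jstar
  rw [← min_add_add_right]
  refine le_min (by linarith) ?_
  rcases hcase with h | h
  · rcases hkc with h2 | h2 <;> subst h <;> subst h2 <;> linarith
  · have hlt : μ istar < μ kstar := hkstar istar (fun e => hj_ne (h.trans e.symm))
    rcases hkc with h2 | h2 <;> subst h <;> subst h2 <;> linarith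
end

section
/- Let μ, μ̂, α satisfy |μ̂(k) − μ(k)| ≤ α(k) for all k, with unique best arm k*. Let i* = argmax_k μ̂(k), j* = argmax_{j≠i*}(μ̂(j) − μ̂(i*) + α(i*) + α(j)), B = μ̂(j*) − μ̂(i*) + α(i*) + α(j*), and k° = argmax_{k∈{i*,j*}} α(k). If i* ≠ k* and j* ≠ k*, then B ≤ −(μ(k*) − μ(k°)) + 6α(k°). -/
theorem breaking_index_bound_case_subopt {K : ℕ} (μ μh α : Fin K → ℝ)
    (kstar : Fin K) (hkstar : ∀ k, k ≠ kstar → μ k < μ kstar)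
    (hconf : ∀ k, |μh k - μ k| ≤ α k)
    (istar : Fin K) (histar : ∀ k, μh k ≤ μh istar)
    (jstar : Fin K) (hj_ne : jstar ≠ istar)
    (hjstar : ∀ j, j ≠ istar →
      μh j - μh istar + α istar + α j ≤ μh jstar - μh istar + α istar + α jstar)
    (hcase1 : istar ≠ kstar) (hcase2 : jstar ≠ kstar)
    (kcirc : Fin K) (hkc : kcirc = istar ∨ kcirc = jstar)
    (hkc1 : α istar ≤ α kcirc) (hkc2 : α jstar ≤ α kcirc)
    (B : ℝ) (hB : B = μh jstar - μh istar + α istar + α jstar) :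
    B ≤ -(μ kstar - μ kcirc) + 6 * α kcirc := by
  have hck := hconf kstar
  have hci := hconf istar
  have hcj := hconf jstar
  rw [abs_le] at hck hci hcj
  have hjk := hjstar kstar (Ne.symm hcase1)
  have hij := histar jstar
  have hik := histar kstar
  rcases hkc with h | h <;> subst h <;> linarith
end
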